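/- For 1 ≤ i ≤ n, the number of binary strings of length n with no two adjacent 1's and with a 0 in position i equals F_{i+1} · F_{n-i+2}. -/
import Mathlib

def OK {m : ℕ} (σ : Fin m → Bool) : Prop :=
  ∀ j k : Fin m, (k : ℕ) = (j : ℕ) + 1 → ¬(σ j = true ∧ σ k = true)

lemma ok_tail {m : ℕ} {σ : Fin (m+1) → Bool} (h : OK σ) : OK (Fin.tail σ) := by
  intro j k hk
  exact h j.succ k.succ (by simp [Fin.val_succ, hk])

lemma ok_cons_false {m : ℕ} {τ : Fin m → Bool} (h : OK τ) : OK (Fin.cons false τ) := by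
  intro j k hk hc
  obtain ⟨h1, h2⟩ := hc
  have hj0 : j ≠ 0 := by
    intro hj; rw [hj] at h1; simp at h1
  obtain ⟨j', rfl⟩ := Fin.exists_succ_eq.2 hj0
  have hk0 : k ≠ 0 := by
    intro hk'; rw [hk'] at hk; simp at hk
  obtain ⟨k', rfl⟩ := Fin.exists_succ_eq.2 hk0
  rw [Fin.cons_succ] at h1 h2
  exact h j' k' (by simpa [Fin.val_succ] using hk) ⟨h1, h2⟩

lemma ok_cons_true {m : ℕ} {τ : Fin m → Bool} (h : OK τ) :
    OK (Fin.cons true (Fin.cons false τ)) := by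
  intro j k hk hc
  obtain ⟨h1, h2⟩ := hc
  have hk0 : k ≠ 0 := by
    intro hk'; rw [hk'] at hk; simp at hk
  obtain ⟨k', rfl⟩ := Fin.exists_succ_eq.2 hk0
  rw [Fin.cons_succ] at h2
  by_cases hj0 : j = 0
  · subst hj0
    have : (k' : ℕ) = 0 := by simpa [Fin.val_succ] using hk
    have hk'0 : k' = 0 := Fin.ext this
    rw [hk'0, Fin.cons_zero] at h2
    exact Bool.false_ne_true h2
  · obtain ⟨j', rfl⟩ := Fin.exists_succ_eq.2 hj0
    rw [Fin.cons_succ] at h1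
    exact ok_cons_false h j' k' (by simpa [Fin.val_succ] using hk) ⟨h1, h2⟩

def stepEquiv (m : ℕ) : {σ : Fin (m+2) → Bool // OK σ} ≃
    {σ : Fin (m+1) → Bool // OK σ} ⊕ {σ : Fin m → Bool // OK σ} where
  toFun σ :=
    if h : σ.1 0 = true then
      Sum.inr ⟨Fin.tail (Fin.tail σ.1), ok_tail (ok_tail σ.2)⟩
    else
      Sum.inl ⟨Fin.tail σ.1, ok_tail σ.2⟩
  invFun x :=
    match x with
    | Sum.inl τ => ⟨Fin.cons false τ.1, ok_cons_false τ.2⟩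
    | Sum.inr τ => ⟨Fin.cons true (Fin.cons false τ.1), ok_cons_true τ.2⟩
  left_inv := by
    rintro ⟨σ, hσ⟩
    by_cases h0 : σ 0 = true
    · have h1 : Fin.tail σ 0 = false := by
        have := hσ 0 1 rfl
        simp [h0] at this
        simpa [Fin.tail] using this
      simp only [h0, dif_pos]
      apply Subtype.ext
      show Fin.cons true (Fin.cons false (Fin.tail (Fin.tail σ))) = σ
      conv_rhs => rw [← Fin.cons_self_tail σ, h0]
      congr 1
      conv_rhs => rw [← Fin.cons_self_tail (Fin.tail σ), h1]
    · simp only [h0, dif_neg, not_false_iff]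
      apply Subtype.ext
      show Fin.cons false (Fin.tail σ) = σ
      conv_rhs => rw [← Fin.cons_self_tail σ]
      congr 1
      revert h0
      cases σ 0 <;> simp
  right_inv := by
    rintro (⟨τ, hτ⟩ | ⟨τ, hτ⟩) <;>
      simp only [Fin.cons_zero, Bool.false_eq_true, dif_neg, not_false_iff, dif_pos,
        Fin.tail_cons]

lemma count_ok : ∀ m, Nat.card {σ : Fin m → Bool // OK σ} = Nat.fib (m + 2) := by
  have key : ∀ m, Nat.card {σ : Fin (m+2) → Bool // OK σ} =
      Nat.card {σ : Fin (m+1) → Bool // OK σ} + Nat.card {σ : Fin m → Bool // OK σ} := by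
    intro m
    rw [Nat.card_congr (stepEquiv m), Nat.card_sum]
  intro m
  induction m using Nat.strong_induction_on with
  | _ m ih =>
    match m with
    | 0 =>
      haveI : Unique {σ : Fin 0 → Bool // OK σ} :=
        ⟨⟨⟨finZeroElim, fun j => j.elim0⟩⟩, by
          rintro ⟨a, ha⟩; apply Subtype.ext; funext j; exact j.elim0⟩
      simp [Nat.card_unique]
    | 1 =>
      have e : {σ : Fin 1 → Bool // OK σ} ≃ (Fin 1 → Bool) :=
        Equiv.subtypeUnivEquiv (fun σ => by
          intro j k hk
          have := j.2; have := k.2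
          omega)
      rw [Nat.card_congr e, Nat.card_eq_fintype_card]
      simp [Nat.fib]
    | (k+2) =>
      rw [key, ih (k+1) (by omega), ih k (by omega)]
      show Nat.fib (k + 2 + 1) + Nat.fib (k + 2) = Nat.fib (k + 2 + 2)
      conv_rhs => rw [Nat.fib_add_two]
      omega

theorem fib_count_zero_at_pos (n i : ℕ) (hi : 1 ≤ i) (hn : i ≤ n) :
    Nat.card {σ : Fin n → Bool //
      (∀ j k : Fin n, (k : ℕ) = (j : ℕ) + 1 → ¬(σ j = true ∧ σ k = true)) ∧
      σ ⟨i - 1, by omega⟩ = false} =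
    Nat.fib (i + 1) * Nat.fib (n - i + 2) := by
  have e : {σ : Fin n → Bool //
      (∀ j k : Fin n, (k : ℕ) = (j : ℕ) + 1 → ¬(σ j = true ∧ σ k = true)) ∧
      σ ⟨i - 1, by omega⟩ = false} ≃
      {p : Fin (i-1) → Bool // OK p} × {s : Fin (n-i) → Bool // OK s} := by
    refine
    { toFun := fun σ =>
        (⟨fun j => σ.1 ⟨j, by omega⟩, fun j k hk hc =>
            σ.2.1 ⟨j, by omega⟩ ⟨k, by omega⟩ hk hc⟩,
         ⟨fun j => σ.1 ⟨i + j, by omega⟩, fun j k hk hc =>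
            σ.2.1 ⟨i + j, by omega⟩ ⟨i + k, by omega⟩ (by simp only [Fin.mk_val]; omega) hc⟩)
      invFun := fun x =>
        ⟨fun j => if h : (j : ℕ) < i - 1 then x.1.1 ⟨j, h⟩
                  else if _h2 : (j : ℕ) = i - 1 then false
                  else x.2.1 ⟨(j : ℕ) - i, by omega⟩, ?_, ?_⟩
      left_inv := ?_
      right_inv := ?_ }
    · -- OK
      intro j k hk hc
      obtain ⟨h1, h2⟩ := hc
      beta_reduce at h1 h2
      by_cases hj : (j : ℕ) < i - 1
      · by_cases hk' : (k : ℕ) < i - 1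
        · rw [dif_pos hj] at h1
          rw [dif_pos hk'] at h2
          exact x.1.2 ⟨j, hj⟩ ⟨k, hk'⟩ hk ⟨h1, h2⟩
        · -- k = i - 1
          have hk2 : (k : ℕ) = i - 1 := by omega
          rw [dif_neg (by omega), dif_pos hk2] at h2
          exact Bool.false_ne_true h2
      · by_cases hj2 : (j : ℕ) = i - 1
        · rw [dif_neg hj, dif_pos hj2] at h1
          exact Bool.false_ne_true h1
        · -- j ≥ i, so j and k both in suffix
          have hji : i ≤ (j : ℕ) := by omega
          rw [dif_neg hj, dif_neg hj2] at h1
          rw [dif_neg (by omega), dif_neg (by omega)] at h2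
          refine x.2.2 ⟨(j:ℕ) - i, by omega⟩ ⟨(k:ℕ) - i, by omega⟩ (by simp only [Fin.mk_val]; omega) ⟨h1, h2⟩
    · -- σ ⟨i-1⟩ = false
      beta_reduce
      rw [dif_neg (by simp), dif_pos (by simp)]
    · rintro ⟨σ, hσ, hσi⟩
      apply Subtype.ext
      funext j
      by_cases hj : (j : ℕ) < i - 1
      · simp only [dif_pos hj]
      · by_cases hj2 : (j : ℕ) = i - 1
        · simp only [dif_neg hj, dif_pos hj2]
          rw [← hσi]
          congr 1
          exact Fin.ext hj2.symm
        · simp only [dif_neg hj, dif_neg hj2]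
          congr 1
          apply Fin.ext
          simp
          omega
    · rintro ⟨⟨p, hp⟩, ⟨s, hs⟩⟩
      apply Prod.ext
      · apply Subtype.ext
        funext j
        have hj : ((⟨(j:ℕ), by omega⟩ : Fin n) : ℕ) < i - 1 := j.2
        simp only [dif_pos hj]
      · apply Subtype.ext
        funext j
        have h1 : ¬ (((⟨i + (j:ℕ), by omega⟩ : Fin n) : ℕ) < i - 1) := by simp; omega
        have h2 : ¬ (((⟨i + (j:ℕ), by omega⟩ : Fin n) : ℕ) = i - 1) := by simp; omega
        simp only [dif_neg h1, dif_neg h2]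
        congr 1
        apply Fin.ext
        simp
  rw [Nat.card_congr e, Nat.card_prod, count_ok, count_ok]
  congr 1 <;> congr 1 <;> omega
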